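/- For all integers k ≥ 3 and n ≥ 2, the class of the divisor δ in the critical group K(H_{k,n}) has additive order exactly k+n−1. -/

import Mathlib

/-- Vertex set of the hinge graph `H_{k,n}`: two shared vertices `u, w`
(encoded as `Sum.inl 0`, `Sum.inl 1`) together with the vertices
`v_{i,j}` (encoded as `Sum.inr (i, j)`, zero-indexed). -/
abbrev HingeVertex (k n : ℕ) : Type := Fin 2 ⊕ (Fin n × Fin (k - 2))

/-- The shared vertex `u`. -/
def hu (k n : ℕ) : HingeVertex k n := Sum.inl 0

/-- The shared vertex `w`. -/
def hw (k n : ℕ) : HingeVertex k n := Sum.inl 1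

/-- The vertex `v_{i+1,j+1}` of the `i+1`-st cycle (zero-indexed here). -/
def hv (k n : ℕ) (i : Fin n) (j : Fin (k - 2)) : HingeVertex k n := Sum.inr (i, j)

/-- The base (Boolean) edge relation of the hinge graph: `u-w`, `u-v_{i,1}`,
`v_{i,j}-v_{i,j+1}`, `v_{i,k-2}-w`. -/
def hingeRelB (k n : ℕ) : HingeVertex k n → HingeVertex k n → Bool
  | Sum.inl a, Sum.inl b => a != b
  | Sum.inl a, Sum.inr p => a == 0 && p.2.val == 0
  | Sum.inr p, Sum.inl b => b == 1 && p.2.val == k - 3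
  | Sum.inr p, Sum.inr q => p.1 == q.1 && q.2.val == p.2.val + 1

/-- The hinge graph `H_{k,n}`: `n` cycles of length `k` glued along the edge `{u, w}`. -/
def Hinge (k n : ℕ) : SimpleGraph (HingeVertex k n) :=
  SimpleGraph.fromRel (fun x y => hingeRelB k n x y = true)

instance (k n : ℕ) : DecidableRel (Hinge k n).Adj := fun x y =>
  inferInstanceAs (Decidable (x ≠ y ∧ (hingeRelB k n x y = true ∨ hingeRelB k n y x = true)))

/-- The number of spanning trees of a graph `G`: the number of edge sets `s ⊆ E(G)`
whose associated spanning subgraph (on all of `V`) is connected and acyclic. -/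
noncomputable def spanningTreeCount {V : Type*} (G : SimpleGraph V) : ℕ :=
  Set.ncard {s : Set (Sym2 V) | s ⊆ G.edgeSet ∧ (SimpleGraph.fromEdgeSet s).IsTree}

/-- The degree homomorphism on divisors. -/
def degHom (V : Type*) [Fintype V] : (V → ℤ) →+ ℤ where
  toFun D := ∑ v, D v
  map_zero' := by simp
  map_add' x y := by simp [Finset.sum_add_distrib]

/-- The group `Div⁰` of degree-zero divisors. -/
def Div0 (V : Type*) [Fintype V] : AddSubgroup (V → ℤ) := (degHom V).ker

/-- The group of principal divisors: the image of the Laplacian `L = Deg - A`. -/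
def Prin {V : Type*} [Fintype V] [DecidableEq V] (G : SimpleGraph V) [DecidableRel G.Adj] :
    AddSubgroup (V → ℤ) :=
  AddMonoidHom.range (Matrix.mulVecLin (G.lapMatrix ℤ)).toAddMonoidHom

/-- The critical group `K(G) = Div⁰(G) / Prin(G)`. -/
def CriticalGroup {V : Type*} [Fintype V] [DecidableEq V] (G : SimpleGraph V)
    [DecidableRel G.Adj] : Type _ :=
  Div0 V ⧸ ((Prin G).addSubgroupOf (Div0 V))

noncomputable instance {V : Type*} [Fintype V] [DecidableEq V] (G : SimpleGraph V)
    [DecidableRel G.Adj] : AddCommGroup (CriticalGroup G) :=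
  inferInstanceAs (AddCommGroup (Div0 V ⧸ ((Prin G).addSubgroupOf (Div0 V))))

/-- The class of a degree-zero divisor in the critical group. -/
def divisorClass {V : Type*} [Fintype V] [DecidableEq V] (G : SimpleGraph V)
    [DecidableRel G.Adj] (D : V → ℤ) (hD : D ∈ Div0 V) : CriticalGroup G :=
  (QuotientAddGroup.mk (⟨D, hD⟩ : Div0 V) :
    Div0 V ⧸ ((Prin G).addSubgroupOf (Div0 V)))

/-- The divisor with value `1` at `x`, `-1` at `y` (for `x ≠ y`) and `0` elsewhere. -/
def pointDiff {V : Type*} [DecidableEq V] (x y : V) : V → ℤ :=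
  fun z => (if z = x then 1 else 0) - (if z = y then 1 else 0)

lemma pointDiff_mem {V : Type*} [Fintype V] [DecidableEq V] (x y : V) :
    pointDiff x y ∈ Div0 V := by
  simp [Div0, AddMonoidHom.mem_ker, degHom, pointDiff, Finset.sum_sub_distrib]

/-! The potential that falls by one at each step along the `n` paths from `u` to `w`
(from `k - 1` at `u` to `0` at `w`) has Laplacian `(k + n - 1) • δ`. Conversely, if
`L x = m • δ`, then `x` is harmonic at the inner vertices, hence affine along each path; all
paths have length `k - 1` and the same endpoints, so they share one slope `s`, and the row of
`L x` at `u` reads `m = -(k - 1) s - n s`. -/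

open Matrix

theorem SimpleGraph.lapMatrix_mulVec_apply_eq_sum_sub {V R : Type*} [Fintype V] [DecidableEq V]
    [NonAssocRing R] (G : SimpleGraph V) [DecidableRel G.Adj] (x : V → R) (v : V) :
    (G.lapMatrix R *ᵥ x) v = ∑ w ∈ G.neighborFinset v, (x v - x w) := by
  rw [lapMatrix_mulVec_apply, Finset.sum_sub_distrib, Finset.sum_const,
    card_neighborFinset_eq_degree, nsmul_eq_mul]

section CriticalGroup

variable {V : Type*} [Fintype V] [DecidableEq V] (G : SimpleGraph V) [DecidableRel G.Adj]

theorem nsmul_divisorClass_eq_zero_iff {D : V → ℤ} (hD : D ∈ Div0 V) (m : ℕ) :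
    m • divisorClass G D hD = 0 ↔ m • D ∈ Prin G :=
  (QuotientAddGroup.eq_zero_iff _).trans AddSubgroup.mem_addSubgroupOf

theorem mem_prin_iff {D : V → ℤ} : D ∈ Prin G ↔ ∃ x, G.lapMatrix ℤ *ᵥ x = D := Iff.rfl

theorem addOrderOf_divisorClass_eq {D : V → ℤ} (hD : D ∈ Div0 V) {N : ℕ}
    (h : ∀ m : ℕ, m • D ∈ Prin G ↔ N ∣ m) : addOrderOf (divisorClass G D hD) = N :=
  Nat.dvd_right_iff_eq.mp fun m => by
    rw [addOrderOf_dvd_iff_nsmul_eq_zero, nsmul_divisorClass_eq_zero_iff, h]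

end CriticalGroup

theorem eq_add_mul_sub_of_add_eq_two_mul {R : Type*} [CommRing R] {a : ℕ → R} {K : ℕ}
    (h : ∀ t, t + 2 ≤ K → a t + a (t + 2) = 2 * a (t + 1)) (t : ℕ) (ht : t ≤ K) :
    a t = a 0 + t * (a 1 - a 0) := by
  induction t using Nat.twoStepInduction with
  | zero => simp
  | one => simp
  | more t ih₀ ih₁ =>
    have h₂ := h t ht
    rw [ih₀ (by omega), ih₁ (by omega)] at h₂
    push_cast at h₂ ⊢
    linear_combination h₂

namespace Hinge

variable {k n : ℕ}

/-- `path k n i t` is the `t`-th vertex on the `i`-th cycle walking from `u` (`t = 0`) to `w`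
(`t = k - 1`, and every larger `t`) without the edge `uw`. -/
def path (k n : ℕ) (i : Fin n) : ℕ → HingeVertex k n
  | 0 => hu k n
  | t + 1 => if h : t < k - 2 then hv k n i ⟨t, h⟩ else hw k n

theorem path_zero (i : Fin n) : path k n i 0 = hu k n := rfl

theorem path_succ_of_lt (i : Fin n) {t : ℕ} (ht : t < k - 2) :
    path k n i (t + 1) = hv k n i ⟨t, ht⟩ := dif_pos ht

theorem path_sub_one (hk : 2 ≤ k) (i : Fin n) : path k n i (k - 1) = hw k n := by
  rw [show k - 1 = k - 2 + 1 by omega]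
  exact dif_neg (lt_irrefl _)

theorem neighborFinset_path_succ (i : Fin n) {t : ℕ} (ht : t < k - 2) :
    (Hinge k n).neighborFinset (path k n i (t + 1)) = {path k n i t, path k n i (t + 2)} := by
  ext y
  simp only [SimpleGraph.mem_neighborFinset, Finset.mem_insert, Finset.mem_singleton]
  rcases y with a | ⟨i', j⟩
  · fin_cases a <;> rcases t with _ | t <;>
      simp [Hinge, path, hu, hv, hw, hingeRelB] <;> split_ifs <;> grind
  · rcases t with _ | t <;>
      simp [Hinge, path, hu, hv, hw, hingeRelB] <;> split_ifs <;> simp [Fin.ext_iff] <;> grind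

theorem neighborFinset_hu (hk : 3 ≤ k) :
    (Hinge k n).neighborFinset (hu k n) =
      insert (hw k n) (Finset.univ.image (hv k n · ⟨0, by omega⟩)) := by
  ext y
  simp only [SimpleGraph.mem_neighborFinset, Finset.mem_insert, Finset.mem_image,
    Finset.mem_univ, true_and]
  rcases y with a | ⟨i, j⟩
  · fin_cases a <;> simp [Hinge, hu, hv, hw, hingeRelB]
  · simp [Hinge, hu, hv, hw, hingeRelB, Fin.ext_iff, eq_comm (a := (j : ℕ))]

theorem neighborFinset_hw (hk : 3 ≤ k) :
    (Hinge k n).neighborFinset (hw k n) =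
      insert (hu k n) (Finset.univ.image (hv k n · ⟨k - 3, by omega⟩)) := by
  ext y
  simp only [SimpleGraph.mem_neighborFinset, Finset.mem_insert, Finset.mem_image,
    Finset.mem_univ, true_and]
  rcases y with a | ⟨i, j⟩
  · fin_cases a <;> simp [Hinge, hu, hv, hw, hingeRelB]
  · simp [Hinge, hu, hv, hw, hingeRelB, Fin.ext_iff, eq_comm (a := (j : ℕ))]

section Rows

variable {R : Type*} [NonAssocRing R] (x : HingeVertex k n → R)

theorem lapMatrix_mulVec_hu (hk : 3 ≤ k) :
    ((Hinge k n).lapMatrix R *ᵥ x) (hu k n) =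
      (x (hu k n) - x (hw k n)) + ∑ i, (x (hu k n) - x (hv k n i ⟨0, by omega⟩)) := by
  rw [SimpleGraph.lapMatrix_mulVec_apply_eq_sum_sub, neighborFinset_hu hk, Finset.sum_insert,
    Finset.sum_image]
  · intro i _ j _ h
    simpa [hv] using h
  · simp [hw, hv]

theorem lapMatrix_mulVec_hw (hk : 3 ≤ k) :
    ((Hinge k n).lapMatrix R *ᵥ x) (hw k n) =
      (x (hw k n) - x (hu k n)) + ∑ i, (x (hw k n) - x (hv k n i ⟨k - 3, by omega⟩)) := by
  rw [SimpleGraph.lapMatrix_mulVec_apply_eq_sum_sub, neighborFinset_hw hk, Finset.sum_insert,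
    Finset.sum_image]
  · intro i _ j _ h
    simpa [hv] using h
  · simp [hu, hv]

theorem lapMatrix_mulVec_path_succ (i : Fin n) {t : ℕ} (ht : t < k - 2) :
    ((Hinge k n).lapMatrix R *ᵥ x) (path k n i (t + 1)) =
      (x (path k n i (t + 1)) - x (path k n i t)) +
        (x (path k n i (t + 1)) - x (path k n i (t + 2))) := by
  rw [SimpleGraph.lapMatrix_mulVec_apply_eq_sum_sub, neighborFinset_path_succ i ht,
    Finset.sum_pair]
  rcases t with _ | t <;> simp [path, hu, hv, hw] <;> split_ifs <;> grind [Fin.ext_iff]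

end Rows

def potential (k n : ℕ) : HingeVertex k n → ℤ
  | Sum.inl a => if a = 0 then (k : ℤ) - 1 else 0
  | Sum.inr p => (k : ℤ) - 2 - p.2

theorem potential_path (i : Fin n) {t : ℕ} (ht : t ≤ k - 1) :
    potential k n (path k n i t) = k - 1 - t := by
  rcases t with _ | t
  · simp [potential, path, hu]
  · simp only [path]
    split_ifs <;> simp [potential, hv, hw] <;> omega

theorem lapMatrix_mulVec_potential (hk : 3 ≤ k) :
    (Hinge k n).lapMatrix ℤ *ᵥ potential k n = (k + n - 1) • pointDiff (hu k n) (hw k n) := by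
  funext v
  rcases v with a | ⟨i, j⟩
  · fin_cases a
    · show ((Hinge k n).lapMatrix ℤ *ᵥ potential k n) (hu k n) = _
      rw [lapMatrix_mulVec_hu _ hk]
      simp [potential, pointDiff, hu, hv, hw]
      omega
    · show ((Hinge k n).lapMatrix ℤ *ᵥ potential k n) (hw k n) = _
      rw [lapMatrix_mulVec_hw _ hk]
      simp [potential, pointDiff, hu, hv, hw]
      push_cast [Nat.cast_sub hk, Nat.cast_sub (by omega : 1 ≤ k + n)]
      ring
  · show ((Hinge k n).lapMatrix ℤ *ᵥ potential k n) (hv k n i j) = _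
    rw [← path_succ_of_lt i j.isLt, lapMatrix_mulVec_path_succ _ i j.isLt,
      potential_path i (by omega), potential_path i (by omega), potential_path i (by omega)]
    simp [pointDiff, hu, hw]

theorem apply_hw_eq_of_lapMatrix_mulVec_hv_eq_zero {R : Type*} [CommRing R] (hk : 3 ≤ k)
    {x : HingeVertex k n → R} (hx : ∀ i j, ((Hinge k n).lapMatrix R *ᵥ x) (hv k n i j) = 0)
    (i : Fin n) :
    x (hw k n) = x (hu k n) + (k - 1) * (x (hv k n i ⟨0, by omega⟩) - x (hu k n)) := by
  have hlinear := eq_add_mul_sub_of_add_eq_two_mul (a := fun t => x (path k n i t)) (K := k - 1)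
    (fun t ht => by
      have hrow : ((Hinge k n).lapMatrix R *ᵥ x) (path k n i (t + 1)) = 0 := by
        rw [path_succ_of_lt i (by omega)]
        exact hx _ _
      rw [lapMatrix_mulVec_path_succ x i (by omega)] at hrow
      linear_combination -hrow) (k - 1) le_rfl
  simpa [path_zero, path_sub_one (by omega : 2 ≤ k), path_succ_of_lt i (by omega : 0 < k - 2),
    Nat.cast_sub (by omega : 1 ≤ k)] using hlinear

theorem nsmul_pointDiff_mem_prin (hk : 3 ≤ k) :
    (k + n - 1) • pointDiff (hu k n) (hw k n) ∈ Prin (Hinge k n) :=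
  (mem_prin_iff _).mpr ⟨potential k n, lapMatrix_mulVec_potential hk⟩

theorem dvd_of_nsmul_pointDiff_mem_prin (hk : 3 ≤ k) (hn : 0 < n) {m : ℕ}
    (h : m • pointDiff (hu k n) (hw k n) ∈ Prin (Hinge k n)) : k + n - 1 ∣ m := by
  obtain ⟨x, hx⟩ := (mem_prin_iff _).mp h
  have hw_eq := apply_hw_eq_of_lapMatrix_mulVec_hv_eq_zero (x := x) hk
    (fun i j => by simp [hx, pointDiff, hu, hv, hw])
  set d := x (hv k n ⟨0, hn⟩ ⟨0, by omega⟩) - x (hu k n)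
  have hslope : ∀ i, x (hv k n i ⟨0, by omega⟩) - x (hu k n) = d := fun i =>
    mul_left_cancel₀ (by omega : (k : ℤ) - 1 ≠ 0)
      (by linear_combination hw_eq ⟨0, hn⟩ - hw_eq i)
  have hu_row := congrFun hx (hu k n)
  have hδ : pointDiff (hu k n) (hw k n) (hu k n) = 1 := by simp [pointDiff, hu, hw]
  simp only [lapMatrix_mulVec_hu x hk, ← neg_sub (x (hv k n _ _)), hslope, Finset.sum_neg_distrib,
    Finset.sum_const, Finset.card_univ, Fintype.card_fin, Pi.smul_apply, hδ, nsmul_eq_mul,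
    mul_one] at hu_row
  refine Int.natCast_dvd_natCast.mp ⟨-d, ?_⟩
  push_cast [Nat.cast_sub (by omega : 1 ≤ k + n)]
  linear_combination -hu_row - hw_eq ⟨0, hn⟩

end Hinge

/-- For all integers `k ≥ 3` and `n ≥ 2`, the class of the divisor `δ`
(value `1` at `u`, `-1` at `w`, `0` elsewhere) in the critical group `K(H_{k,n})` has
additive order exactly `k + n - 1`. -/
theorem hinge_delta_addOrderOf (k n : ℕ) (hk : 3 ≤ k) (hn : 2 ≤ n) :
    addOrderOf (divisorClass (Hinge k n)
      (pointDiff (hu k n) (hw k n)) (pointDiff_mem _ _)) = k + n - 1 := by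
  refine addOrderOf_divisorClass_eq _ _ fun m =>
    ⟨Hinge.dvd_of_nsmul_pointDiff_mem_prin hk (by omega), ?_⟩
  rintro ⟨q, rfl⟩
  rw [mul_comm, mul_smul]
  exact (Prin _).nsmul_mem (Hinge.nsmul_pointDiff_mem_prin hk) q
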